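/- arXiv:1508.05714 — 2 statements merged into one kernel-verified Lean document; each statement's English description precedes it below -/
import Mathlib

section
/- For every positive integer n, the 2-adic valuation of P_n equals the 2-adic valuation of n, i.e. ν₂(P_n) = ν₂(n). -/
/-- The Pell sequence: `P 0 = 0`, `P 1 = 1`, `P (n+2) = 2 * P (n+1) + P n`. -/
def pell : ℕ → ℕ
  | 0 => 0
  | 1 => 1
  | n + 2 => 2 * pell (n + 1) + pell n

/-- The companion Pell sequence. -/
def pellQ : ℕ → ℕ
  | 0 => 1
  | 1 => 1
  | n + 2 => 2 * pellQ (n + 1) + pellQ n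

lemma pell_q_rec : ∀ m, pell (m + 1) = pell m + pellQ m ∧
    pellQ (m + 1) = pell (m + 1) + pell m := by
  intro m
  induction m with
  | zero => simp [pell, pellQ]
  | succ n ih =>
    obtain ⟨h1, h2⟩ := ih
    constructor
    · show 2 * pell (n + 1) + pell n = _
      omega
    · show 2 * pellQ (n + 1) + pellQ n = _
      have e : pell (n + 1 + 1) = 2 * pell (n + 1) + pell n := rfl
      omega

lemma pell_succ (m : ℕ) : pell (m + 1) = pell m + pellQ m := (pell_q_rec m).1

lemma pellQ_succ (m : ℕ) : pellQ (m + 1) = 2 * pell m + pellQ m := by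
  have h1 := (pell_q_rec m).1
  have h2 := (pell_q_rec m).2
  omega

lemma pell_add (m n : ℕ) : pell (m + n) = pell m * pellQ n + pellQ m * pell n ∧
    pellQ (m + n) = pellQ m * pellQ n + 2 * pell m * pell n := by
  induction n with
  | zero => simp [pell, pellQ]
  | succ k ih =>
    obtain ⟨h1, h2⟩ := ih
    have e1 : m + (k + 1) = (m + k) + 1 := by ring
    rw [e1, pell_succ (m + k), pellQ_succ (m + k), pell_succ k, pellQ_succ k, h1, h2]
    constructor <;> ring

lemma pell_double (n : ℕ) : pell (2 * n) = 2 * (pell n * pellQ n) := by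
  have := (pell_add n n).1
  rw [show 2 * n = n + n by ring, this]
  ring

lemma pellQ_odd (n : ℕ) : pellQ n % 2 = 1 := by
  induction n with
  | zero => rfl
  | succ k ih => rw [pellQ_succ]; omega

lemma pell_mod_two (n : ℕ) : pell n % 2 = n % 2 := by
  induction n with
  | zero => rfl
  | succ k ih =>
    rw [pell_succ]
    have := pellQ_odd k
    omega

lemma pell_pos (n : ℕ) (hn : 0 < n) : 0 < pell n := by
  induction n with
  | zero => omega
  | succ k ih =>
    rw [pell_succ]
    have h := pellQ_odd k
    omega

/-- For every positive integer `n`, the 2-adic valuation of `P n` equals the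
2-adic valuation of `n`. -/
theorem two_adic_valuation_pell (n : ℕ) (hn : 0 < n) :
    padicValNat 2 (pell n) = padicValNat 2 n := by
  induction n using Nat.strong_induction_on with
  | _ n ih =>
    rcases Nat.even_or_odd n with he | ho
    · obtain ⟨m, hm⟩ := he
      have hmn : n = 2 * m := by omega
      have hm0 : 0 < m := by omega
      have hmlt : m < n := by omega
      have hq : ¬ (2 ∣ pellQ m) := by
        have := pellQ_odd m
        omega
      have hpm : 0 < pell m := pell_pos m hm0
      have hq0 : pellQ m ≠ 0 := by intro h; rw [h] at hq; exact hq (dvd_zero 2)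
      rw [hmn, pell_double,
        padicValNat.mul (p := 2) two_ne_zero (by positivity),
        padicValNat.mul (p := 2) (by omega) hq0,
        padicValNat.mul (p := 2) two_ne_zero (by omega),
        padicValNat.eq_zero_of_not_dvd hq, ih m hmlt hm0, add_zero]
    · have h1 : ¬ (2 ∣ pell n) := by
        have := pell_mod_two n
        rcases ho with ⟨k, hk⟩
        omega
      have h2 : ¬ (2 ∣ n) := by
        rcases ho with ⟨k, hk⟩
        omega
      rw [padicValNat.eq_zero_of_not_dvd h1, padicValNat.eq_zero_of_not_dvd h2]
end

section
/- For every integer n ≥ 2, Σ_{d | n} (log d)/d < ( Σ_{p | n, p prime} (log p)/(p − 1) ) · (n/φ(n)), where both sums range over positive divisors d of n and prime divisors p of n respectively. -/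
open Finset

/-- For `d ∣ n`, `φ(n) * d ≤ φ(d) * n`. -/
lemma totient_ratio_aux {d n : ℕ} (hd : d ∣ n) (hn : n ≠ 0) :
    n.totient * d ≤ d.totient * n := by
  have hd0 : d ≠ 0 := fun h => hn (by simpa [h] using hd)
  have key : (n.totient : ℚ) * d ≤ (d.totient : ℚ) * n := by
    rw [Nat.totient_eq_mul_prod_factors n, Nat.totient_eq_mul_prod_factors d]
    have hsub : d.primeFactors ⊆ n.primeFactors := Nat.primeFactors_mono hd hn
    have hfac : ∀ p ∈ n.primeFactors, (0:ℚ) ≤ 1 - (p:ℚ)⁻¹ ∧ 1 - (p:ℚ)⁻¹ ≤ 1 := by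
      intro p hp
      have hp2 : 2 ≤ p := (Nat.prime_of_mem_primeFactors hp).two_le
      have hp0 : (0:ℚ) < p := by exact_mod_cast Nat.lt_of_lt_of_le Nat.zero_lt_two hp2
      constructor
      · have : (p:ℚ)⁻¹ ≤ 1 := by
          rw [inv_le_one_iff₀]; right; exact_mod_cast Nat.one_le_of_lt hp2
        linarith
      · have : (0:ℚ) ≤ (p:ℚ)⁻¹ := by positivity
        linarith
    have hprod : (∏ p ∈ n.primeFactors, (1 - (p:ℚ)⁻¹)) ≤
        ∏ p ∈ d.primeFactors, (1 - (p:ℚ)⁻¹) := by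
      rw [← Finset.prod_sdiff hsub]
      have h1 : (∏ p ∈ n.primeFactors \ d.primeFactors, (1 - (p:ℚ)⁻¹)) ≤ 1 :=
        Finset.prod_le_one (fun p hp => (hfac p (Finset.mem_sdiff.mp hp).1).1)
          (fun p hp => (hfac p (Finset.mem_sdiff.mp hp).1).2)
      have h2 : (0:ℚ) ≤ ∏ p ∈ d.primeFactors, (1 - (p:ℚ)⁻¹) :=
        Finset.prod_nonneg (fun p hp => (hfac p (hsub hp)).1)
      calc (∏ p ∈ n.primeFactors \ d.primeFactors, (1 - (p:ℚ)⁻¹)) *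
            ∏ p ∈ d.primeFactors, (1 - (p:ℚ)⁻¹)
          ≤ 1 * ∏ p ∈ d.primeFactors, (1 - (p:ℚ)⁻¹) := by
            exact mul_le_mul_of_nonneg_right h1 h2
        _ = _ := one_mul _
    have hnd : (0:ℚ) ≤ (n:ℚ) * d := by positivity
    calc (n:ℚ) * (∏ p ∈ n.primeFactors, (1 - (p:ℚ)⁻¹)) * d
        = (n:ℚ) * d * ∏ p ∈ n.primeFactors, (1 - (p:ℚ)⁻¹) := by ring
      _ ≤ (n:ℚ) * d * ∏ p ∈ d.primeFactors, (1 - (p:ℚ)⁻¹) :=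
          mul_le_mul_of_nonneg_left hprod hnd
      _ = (d:ℚ) * (∏ p ∈ d.primeFactors, (1 - (p:ℚ)⁻¹)) * n := by ring
  exact_mod_cast key

/-- For every integer `n ≥ 2`,
`Σ_{d ∣ n} (log d)/d < (Σ_{p ∣ n, p prime} (log p)/(p - 1)) * (n / φ(n))`. -/
theorem sum_log_div_divisors_lt (n : ℕ) (hn : 2 ≤ n) :
    (∑ d ∈ n.divisors, Real.log d / (d : ℝ)) <
      (∑ p ∈ n.primeFactors, Real.log p / ((p : ℝ) - 1)) *
        ((n : ℝ) / (Nat.totient n : ℝ)) := by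
  have hn0 : n ≠ 0 := by omega
  set S : ℝ := ∑ d ∈ n.divisors, (1 : ℝ) / d with hS
  have hdiv_pos : ∀ d ∈ n.divisors, 0 < (d : ℝ) := by
    intro d hd
    exact_mod_cast Nat.pos_of_mem_divisors hd
  have hS_pos : 0 < S := by
    apply Finset.sum_pos
    · intro d hd
      exact div_pos one_pos (hdiv_pos d hd)
    · exact ⟨1, Nat.one_mem_divisors.mpr hn0⟩
  -- Lemma A : sum over divisors divisible by q is at most S / q
  have lemA : ∀ q : ℕ, 1 ≤ q →
      (∑ d ∈ n.divisors, if q ∣ d then (1:ℝ)/d else 0) ≤ (1/(q:ℝ)) * S := by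
    intro q hq
    have hq0 : (0:ℝ) < q := by exact_mod_cast hq
    rw [← Finset.sum_filter]
    have hinj : Set.InjOn (· / q) ↑(n.divisors.filter (q ∣ ·)) := by
      intro a ha b hb hab
      simp only [Finset.coe_filter, Set.mem_setOf_eq] at ha hb
      simp only at hab
      calc a = a / q * q := (Nat.div_mul_cancel ha.2).symm
        _ = b / q * q := by rw [hab]
        _ = b := Nat.div_mul_cancel hb.2
    calc (∑ d ∈ n.divisors.filter (q ∣ ·), (1:ℝ)/d)
        = ∑ d ∈ n.divisors.filter (q ∣ ·), (1/(q:ℝ)) * (1/((d/q : ℕ) : ℝ)) := by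
          apply Finset.sum_congr rfl
          intro d hd
          obtain ⟨hdn, hqd⟩ := Finset.mem_filter.mp hd
          have : ((d / q : ℕ) : ℝ) = (d : ℝ) / q := by
            rw [Nat.cast_div hqd (by positivity)]
          rw [this]
          field_simp
      _ = ∑ c ∈ (n.divisors.filter (q ∣ ·)).image (· / q), (1/(q:ℝ)) * (1/(c:ℝ)) := by
          rw [Finset.sum_image (fun a ha b hb hab => hinj ha hb hab)]
      _ ≤ ∑ c ∈ n.divisors, (1/(q:ℝ)) * (1/(c:ℝ)) := by
          apply Finset.sum_le_sum_of_subset_of_nonneg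
          · intro c hc
            obtain ⟨d, hd, rfl⟩ := Finset.mem_image.mp hc
            obtain ⟨hdn, hqd⟩ := Finset.mem_filter.mp hd
            exact Nat.mem_divisors.mpr ⟨(Nat.div_dvd_of_dvd hqd).trans
              (Nat.mem_divisors.mp hdn).1, hn0⟩
          · intro c _ _
            positivity
      _ = (1/(q:ℝ)) * S := by rw [hS, ← Finset.mul_sum]
  -- geometric bound
  have geom : ∀ p : ℕ, 2 ≤ p → ∀ K : ℕ,
      (∑ k ∈ Finset.range K, (1:ℝ)/(p:ℝ)^(k+1)) < 1/((p:ℝ)-1) := by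
    intro p hp K
    have hp1 : (1:ℝ) < p := by exact_mod_cast hp
    have hp0 : (0:ℝ) < p := by linarith
    have hpm1 : (0:ℝ) < (p:ℝ) - 1 := by linarith
    rw [lt_div_iff₀ hpm1]
    have key : (∑ k ∈ Finset.range K, (1:ℝ)/(p:ℝ)^(k+1)) * ((p:ℝ)-1)
        = 1 - 1/(p:ℝ)^K := by
      rw [Finset.sum_mul]
      have : ∀ k, (1:ℝ)/(p:ℝ)^(k+1) * ((p:ℝ)-1)
          = 1/(p:ℝ)^k - 1/(p:ℝ)^(k+1) := by
        intro k
        have h1 : (p:ℝ)^k ≠ 0 := by positivity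
        have h2 : (p:ℝ)^(k+1) ≠ 0 := by positivity
        field_simp
        ring
      rw [Finset.sum_congr rfl (fun k _ => this k),
        Finset.sum_range_sub' (fun k => 1/(p:ℝ)^k) K]
      norm_num
    rw [key]
    have : (0:ℝ) < 1/(p:ℝ)^K := by positivity
    linarith
  -- decomposition of log d
  have logdec : ∀ d ∈ n.divisors,
      Real.log d = ∑ p ∈ n.primeFactors, (d.factorization p : ℝ) * Real.log p := by
    intro d hd
    obtain ⟨hdn, _⟩ := Nat.mem_divisors.mp hd
    have hd0 : d ≠ 0 := fun h => hn0 (by simpa [h] using hdn)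
    have hsub : d.primeFactors ⊆ n.primeFactors := Nat.primeFactors_mono hdn hn0
    have h1 : Real.log d = ∑ p ∈ d.primeFactors, (d.factorization p : ℝ) * Real.log p := by
      conv_lhs => rw [← Nat.factorization_prod_pow_eq_self hd0]
      rw [Nat.prod_factorization_eq_prod_primeFactors]
      push_cast
      rw [Real.log_prod]
      · apply Finset.sum_congr rfl
        intro p hp
        rw [Real.log_pow]
      · intro p hp
        have := (Nat.prime_of_mem_primeFactors hp).pos
        positivity
    rw [h1]
    apply Finset.sum_subset hsub
    intro p hp hpd
    have : d.factorization p = 0 := by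
      rw [← Nat.support_factorization] at hpd
      exact Finsupp.notMem_support_iff.mp hpd
    simp [this]
  -- indicator decomposition of the p-adic valuation
  have vdec : ∀ p ∈ n.primeFactors, ∀ d ∈ n.divisors,
      (d.factorization p : ℝ) =
        ∑ k ∈ Finset.range (n.factorization p), (if p^(k+1) ∣ d then (1:ℝ) else 0) := by
    intro p hp d hd
    have hpp : p.Prime := Nat.prime_of_mem_primeFactors hp
    obtain ⟨hdn, _⟩ := Nat.mem_divisors.mp hd
    have hd0 : d ≠ 0 := fun h => hn0 (by simpa [h] using hdn)
    have hle : d.factorization p ≤ n.factorization p :=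
      (Nat.factorization_le_iff_dvd hd0 hn0).mpr hdn p
    have hfil : (Finset.range (n.factorization p)).filter (fun k => p^(k+1) ∣ d)
        = Finset.range (d.factorization p) := by
      ext k
      simp only [Finset.mem_filter, Finset.mem_range]
      rw [hpp.pow_dvd_iff_le_factorization hd0]
      omega
    rw [Finset.sum_boole, hfil, Finset.card_range]
  -- main reorganization
  have main : (∑ d ∈ n.divisors, Real.log d / (d : ℝ))
      = ∑ p ∈ n.primeFactors, Real.log p *
          (∑ d ∈ n.divisors, (d.factorization p : ℝ) / d) := by
    calc (∑ d ∈ n.divisors, Real.log d / (d : ℝ))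
        = ∑ d ∈ n.divisors, ∑ p ∈ n.primeFactors,
            ((d.factorization p : ℝ) * Real.log p) / d := by
          apply Finset.sum_congr rfl
          intro d hd
          rw [logdec d hd, Finset.sum_div]
      _ = ∑ p ∈ n.primeFactors, ∑ d ∈ n.divisors,
            ((d.factorization p : ℝ) * Real.log p) / d := Finset.sum_comm
      _ = _ := by
          apply Finset.sum_congr rfl
          intro p hp
          rw [Finset.mul_sum]
          apply Finset.sum_congr rfl
          intro d hd
          ring
  -- bound on inner sums
  have inner_lt : ∀ p ∈ n.primeFactors,
      (∑ d ∈ n.divisors, (d.factorization p : ℝ) / d) < S * (1/((p:ℝ)-1)) := by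
    intro p hp
    have hpp : p.Prime := Nat.prime_of_mem_primeFactors hp
    have hp2 : 2 ≤ p := hpp.two_le
    calc (∑ d ∈ n.divisors, (d.factorization p : ℝ) / d)
        = ∑ d ∈ n.divisors, ∑ k ∈ Finset.range (n.factorization p),
            (if p^(k+1) ∣ d then (1:ℝ)/d else 0) := by
          apply Finset.sum_congr rfl
          intro d hd
          rw [vdec p hp d hd, Finset.sum_div]
          apply Finset.sum_congr rfl
          intro k _
          rw [ite_div, zero_div]
      _ = ∑ k ∈ Finset.range (n.factorization p), ∑ d ∈ n.divisors,
            (if p^(k+1) ∣ d then (1:ℝ)/d else 0) := Finset.sum_comm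
      _ ≤ ∑ k ∈ Finset.range (n.factorization p), (1/((p:ℕ)^(k+1) : ℝ)) * S := by
          apply Finset.sum_le_sum
          intro k _
          exact_mod_cast lemA (p^(k+1)) (Nat.one_le_pow _ _ hpp.pos)
      _ = (∑ k ∈ Finset.range (n.factorization p), (1:ℝ)/(p:ℝ)^(k+1)) * S := by
          rw [Finset.sum_mul]
      _ < (1/((p:ℝ)-1)) * S :=
          mul_lt_mul_of_pos_right (geom p hp2 _) hS_pos
      _ = S * (1/((p:ℝ)-1)) := mul_comm _ _
  -- strict inequality against S
  have step1 : (∑ d ∈ n.divisors, Real.log d / (d : ℝ))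
      < (∑ p ∈ n.primeFactors, Real.log p / ((p : ℝ) - 1)) * S := by
    rw [main, Finset.sum_mul]
    apply Finset.sum_lt_sum_of_nonempty
    · exact Nat.nonempty_primeFactors.mpr hn
    · intro p hp
      have hpp : p.Prime := Nat.prime_of_mem_primeFactors hp
      have hlogp : 0 < Real.log p := by
        apply Real.log_pos
        exact_mod_cast hpp.one_lt
      calc Real.log p * (∑ d ∈ n.divisors, (d.factorization p : ℝ) / d)
          < Real.log p * (S * (1/((p:ℝ)-1))) :=
            mul_lt_mul_of_pos_left (inner_lt p hp) hlogp
        _ = Real.log p / ((p:ℝ)-1) * S := by ring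
  -- S ≤ n / φ(n)
  have htot_pos : 0 < n.totient := Nat.totient_pos.mpr (by omega)
  have htotR : (0:ℝ) < n.totient := by exact_mod_cast htot_pos
  have hnR : (0:ℝ) < n := by positivity
  have step2 : S ≤ (n : ℝ) / (n.totient : ℝ) := by
    rw [le_div_iff₀ htotR]
    have key : S * (n.totient : ℝ) = ∑ d ∈ n.divisors, (n.totient : ℝ) / d := by
      rw [hS, Finset.sum_mul]
      apply Finset.sum_congr rfl
      intro d _
      ring
    rw [key]
    have reidx : (∑ d ∈ n.divisors, (n.totient : ℝ) / d)
        = ∑ d ∈ n.divisors, (n.totient : ℝ) / ((n / d : ℕ) : ℝ) :=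
      (Nat.sum_div_divisors n (fun d => (n.totient : ℝ) / d)).symm
    rw [reidx]
    have bound : ∀ d ∈ n.divisors, (n.totient : ℝ) / ((n / d : ℕ) : ℝ) ≤ (d.totient : ℝ) := by
      intro d hd
      obtain ⟨hdn, _⟩ := Nat.mem_divisors.mp hd
      have hd_pos : 0 < d := Nat.pos_of_mem_divisors hd
      have hcast : ((n / d : ℕ) : ℝ) = (n : ℝ) / d := by
        rw [Nat.cast_div hdn (by exact_mod_cast hd_pos.ne')]
      rw [hcast]
      have hdR : (0:ℝ) < d := by exact_mod_cast hd_pos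
      have hnat : (n.totient : ℝ) * d ≤ (d.totient : ℝ) * n := by
        exact_mod_cast totient_ratio_aux hdn hn0
      rw [div_le_iff₀ (by positivity : (0:ℝ) < (n:ℝ)/d)]
      have heq : (d.totient:ℝ) * ((n:ℝ)/d) = (d.totient:ℝ) * n / d := by ring
      rw [heq, le_div_iff₀ hdR]
      exact hnat
    calc (∑ d ∈ n.divisors, (n.totient : ℝ) / ((n / d : ℕ) : ℝ))
        ≤ ∑ d ∈ n.divisors, (d.totient : ℝ) := Finset.sum_le_sum bound
      _ = (n : ℝ) := by
          rw [← Nat.cast_sum]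
          exact_mod_cast congrArg (Nat.cast (R := ℝ)) (Nat.sum_totient n)
  -- combine
  have hA_nonneg : 0 ≤ ∑ p ∈ n.primeFactors, Real.log p / ((p : ℝ) - 1) := by
    apply Finset.sum_nonneg
    intro p hp
    have hpp : p.Prime := Nat.prime_of_mem_primeFactors hp
    have h1 : (1:ℝ) < p := by exact_mod_cast hpp.one_lt
    apply div_nonneg
    · exact Real.log_nonneg (by linarith)
    · linarith
  calc (∑ d ∈ n.divisors, Real.log d / (d : ℝ))
      < (∑ p ∈ n.primeFactors, Real.log p / ((p : ℝ) - 1)) * S := step1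
    _ ≤ (∑ p ∈ n.primeFactors, Real.log p / ((p : ℝ) - 1)) *
        ((n : ℝ) / (Nat.totient n : ℝ)) := mul_le_mul_of_nonneg_left step2 hA_nonneg
end
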